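/- In the ring of formal power series in x over ℤ[y,z], the ordinary generating function of the homogeneous matching polynomials of cycles satisfies (1 − x·z − x²·y·z) · Σ_{n≥3} T_n(y,z) x^n = (3yz² + z³)·x³ + (2y²z² + yz³)·x⁴. -/

import Mathlib

/-!
A matching of `C_n` is encoded by the set of indices `i` of its edges `{i, i + 1}`: a subset of
`{0, …, n - 1}` without two cyclically consecutive elements. Splitting according to whether the
last index `n - 1` is used gives `T_{m+3} = z A_{m+2} + y z² A'_m`, where `A` and `A'` are the
analogous sums over the index sets `{0, …, m + 1}` and `{1, …, m}` of two paths. Both satisfy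
`A_{m+2} = z A_{m+1} + y z A_m` (split on the last index again), hence so does `T_n` for `n ≥ 3`,
and this recurrence says that `1 - x z - x² y z` kills the series up to the terms in `x³` and `x⁴`,
read off from `T_3` and `T_4`.
-/

open scoped Classical

noncomputable section

/-- The path graph `P_n` on `Fin n` (vertices `1,…,n` of the paper), edges `{i, i+1}`. -/
def pathG (n : ℕ) : SimpleGraph (Fin n) :=
  SimpleGraph.fromRel (fun i j => (i : ℕ) + 1 = (j : ℕ))

/-- The cycle graph `C_n` on `Fin n`, edges `{i, i+1 mod n}`. -/
def cycG (n : ℕ) : SimpleGraph (Fin n) :=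
  SimpleGraph.fromRel (fun i j => ((i : ℕ) + 1) % n = (j : ℕ))

/-- The matchings of a graph `G`: finsets of pairwise disjoint edges of `G`. -/
def matchings {V : Type*} [Fintype V] (G : SimpleGraph V) : Finset (Finset (Sym2 V)) :=
  Finset.univ.filter (fun μ =>
    (↑μ : Set (Sym2 V)) ⊆ G.edgeSet ∧
    ∀ e ∈ μ, ∀ f ∈ μ, e ≠ f → ∀ v : V, v ∈ e → v ∉ f)

/-- `U_m(Y,Z) = Σ_{μ matching of P_m} Y^{|μ|} Z^{(m-1)-|μ|}`,
the homogeneous matching polynomial of the path `P_m`, evaluated at `Y`, `Z`. -/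
def Upoly {S : Type*} [CommSemiring S] (m : ℕ) (Y Z : S) : S :=
  ∑ μ ∈ matchings (pathG m), Y ^ μ.card * Z ^ ((m - 1) - μ.card)

/-- `T_m(Y,Z) = Σ_{μ matching of C_m} Y^{|μ|} Z^{m-|μ|}`,
the homogeneous matching polynomial of the cycle `C_m` (`m ≥ 3`), evaluated at `Y`, `Z`. -/
def Tpoly {S : Type*} [CommSemiring S] (m : ℕ) (Y Z : S) : S :=
  ∑ μ ∈ matchings (cycG m), Y ^ μ.card * Z ^ (m - μ.card)

open Finset

theorem Finset.sum_eq_sum_filter_notMem_add_sum_insert {α M : Type*} [DecidableEq α]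
    [AddCommMonoid M] {F H : Finset (Finset α)} {x : α} (f : Finset α → M)
    (hH : ∀ T ∈ H, x ∉ T) (hF : ∀ T, x ∉ T → (insert x T ∈ F ↔ T ∈ H)) :
    ∑ S ∈ F, f S = ∑ S ∈ F.filter (x ∉ ·), f S + ∑ T ∈ H, f (insert x T) := by
  have himage : F.filter (x ∈ ·) = H.image (insert x) := by
    ext S
    simp only [mem_filter, mem_image]
    constructor
    · rintro ⟨hS, hxS⟩
      refine ⟨S.erase x, (hF _ (notMem_erase x S)).1 ?_, insert_erase hxS⟩
      rwa [insert_erase hxS]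
    · rintro ⟨T, hT, rfl⟩
      exact ⟨(hF T (hH T hT)).2 hT, mem_insert_self x T⟩
  rw [← sum_filter_not_add_sum_filter F (x ∈ ·), himage, sum_image fun T hT T' hT' h => by
    simpa [hH T hT, hH T' hT'] using congrArg (erase · x) h]

/-- The index `i` stands for the edge `{i, i + 1}`, so these are the matchings of the path with
edges `a, …, a + m - 1`. -/
def pathSets (a m : ℕ) : Finset (Finset ℕ) :=
  (Ico a (a + m)).powerset.filter fun S => ∀ i ∈ S, i + 1 ∉ S

def cycleSets (n : ℕ) : Finset (Finset ℕ) :=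
  (pathSets 0 n).filter fun S => n - 1 ∈ S → 0 ∉ S

lemma card_le_of_mem_pathSets {a m : ℕ} {S : Finset ℕ} (h : S ∈ pathSets a m) : #S ≤ m := by
  simpa using card_le_card (mem_powerset.1 (mem_filter.1 h).1)

lemma notMem_of_mem_pathSets {a m i : ℕ} {S : Finset ℕ} (h : S ∈ pathSets a m)
    (hi : a + m ≤ i) : i ∉ S := by
  simp only [pathSets, mem_filter, mem_powerset] at h
  exact fun hiS => (mem_Ico.1 (h.1 hiS)).2.not_ge hi

lemma filter_notMem_pathSets (a m : ℕ) :
    (pathSets a (m + 2)).filter (a + m + 1 ∉ ·) = pathSets a (m + 1) := by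
  ext S
  simp only [pathSets, mem_filter, mem_powerset, subset_iff, mem_Ico]
  grind

lemma insert_mem_pathSets_iff {a m : ℕ} {T : Finset ℕ} (hT : a + m + 1 ∉ T) :
    insert (a + m + 1) T ∈ pathSets a (m + 2) ↔ T ∈ pathSets a m := by
  simp only [pathSets, mem_filter, mem_powerset, subset_iff, mem_Ico, mem_insert]
  grind

lemma filter_notMem_cycleSets (m : ℕ) :
    (cycleSets (m + 3)).filter (m + 2 ∉ ·) = pathSets 0 (m + 2) := by
  ext S
  simp only [cycleSets, pathSets, mem_filter, mem_powerset, subset_iff, mem_Ico]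
  grind

lemma insert_mem_cycleSets_iff {m : ℕ} {T : Finset ℕ} (hT : m + 2 ∉ T) :
    insert (m + 2) T ∈ cycleSets (m + 3) ↔ T ∈ pathSets 1 m := by
  simp only [cycleSets, pathSets, mem_filter, mem_powerset, subset_iff, mem_Ico, mem_insert]
  grind

section Polynomials

variable {R : Type*} [CommSemiring R]

def pathPoly (a m : ℕ) (Y Z : R) : R := ∑ S ∈ pathSets a m, Y ^ #S * Z ^ (m - #S)

def cyclePoly (n : ℕ) (Y Z : R) : R := ∑ S ∈ cycleSets n, Y ^ #S * Z ^ (n - #S)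

lemma pathPoly_zero (a : ℕ) (Y Z : R) : pathPoly a 0 Y Z = 1 := by
  simp [pathPoly, pathSets, filter_singleton]

lemma pathPoly_one (a : ℕ) (Y Z : R) : pathPoly a 1 Y Z = Y + Z := by
  have : pathSets a 1 = {{a}, ∅} := by
    ext S
    simp only [pathSets, mem_filter, mem_powerset, Nat.Ico_succ_singleton, subset_singleton_iff,
      mem_insert, mem_singleton]
    grind
  simp [pathPoly, this, sum_pair (singleton_ne_empty a)]

lemma pathPoly_add_two (a m : ℕ) (Y Z : R) :
    pathPoly a (m + 2) Y Z = Z * pathPoly a (m + 1) Y Z + Y * Z * pathPoly a m Y Z := by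
  unfold pathPoly
  rw [sum_eq_sum_filter_notMem_add_sum_insert (x := a + m + 1) (H := pathSets a m) _
      (fun T hT => notMem_of_mem_pathSets hT (by omega)) (fun T hT => insert_mem_pathSets_iff hT),
    filter_notMem_pathSets, mul_sum, mul_sum]
  congr 1 <;> refine sum_congr rfl fun S hS => ?_
  · rw [show m + 2 - #S = m + 1 - #S + 1 by have := card_le_of_mem_pathSets hS; omega]
    ring
  · rw [card_insert_of_notMem (notMem_of_mem_pathSets hS (by omega)),
      show m + 2 - (#S + 1) = m - #S + 1 by have := card_le_of_mem_pathSets hS; omega]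
    ring

lemma cyclePoly_add_three (m : ℕ) (Y Z : R) :
    cyclePoly (m + 3) Y Z = Z * pathPoly 0 (m + 2) Y Z + Y * Z ^ 2 * pathPoly 1 m Y Z := by
  unfold cyclePoly pathPoly
  rw [sum_eq_sum_filter_notMem_add_sum_insert (x := m + 2) (H := pathSets 1 m) _
      (fun T hT => notMem_of_mem_pathSets hT (by omega)) (fun T hT => insert_mem_cycleSets_iff hT),
    filter_notMem_cycleSets, mul_sum, mul_sum]
  congr 1 <;> refine sum_congr rfl fun S hS => ?_
  · rw [show m + 3 - #S = m + 2 - #S + 1 by have := card_le_of_mem_pathSets hS; omega]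
    ring
  · rw [card_insert_of_notMem (notMem_of_mem_pathSets hS (by omega)),
      show m + 3 - (#S + 1) = m - #S + 2 by have := card_le_of_mem_pathSets hS; omega]
    ring

lemma cyclePoly_three (Y Z : R) : cyclePoly 3 Y Z = 3 * Y * Z ^ 2 + Z ^ 3 := by
  rw [cyclePoly_add_three 0, pathPoly_add_two 0 0, pathPoly_one, pathPoly_zero, pathPoly_zero]
  ring

lemma cyclePoly_four (Y Z : R) :
    cyclePoly 4 Y Z = Z * cyclePoly 3 Y Z + (2 * Y ^ 2 * Z ^ 2 + Y * Z ^ 3) := by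
  rw [cyclePoly_three, cyclePoly_add_three 1, pathPoly_add_two 0 1, pathPoly_add_two 0 0,
    pathPoly_one, pathPoly_one, pathPoly_zero]
  ring

lemma cyclePoly_add_five (m : ℕ) (Y Z : R) :
    cyclePoly (m + 5) Y Z = Z * cyclePoly (m + 4) Y Z + Y * Z * cyclePoly (m + 3) Y Z := by
  rw [cyclePoly_add_three (m + 2), cyclePoly_add_three (m + 1), cyclePoly_add_three m,
    pathPoly_add_two 0 (m + 2), pathPoly_add_two 1 m]
  ring

end Polynomials

section CycleEdges

variable {n : ℕ} [NeZero n]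

lemma Fin.val_add_one_eq_mod (i : Fin n) : ((i + 1 : Fin n) : ℕ) = ((i : ℕ) + 1) % n := by
  rw [Fin.val_add, Fin.val_one', Nat.add_mod_mod]

lemma Fin.val_add_one_eq_ite (i : Fin n) :
    ((i + 1 : Fin n) : ℕ) = if (i : ℕ) + 1 = n then 0 else (i : ℕ) + 1 := by
  rw [Fin.val_add_one_eq_mod]
  split_ifs with h
  · simp [h]
  · exact Nat.mod_eq_of_lt (by omega)

lemma Fin.add_one_ne_self (hn : 2 ≤ n) (i : Fin n) : i + 1 ≠ i := by
  rw [Ne, Fin.ext_iff, Fin.val_add_one_eq_ite]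
  split_ifs <;> omega

lemma cycG_adj (hn : 2 ≤ n) {i j : Fin n} : (cycG n).Adj i j ↔ j = i + 1 ∨ i = j + 1 := by
  simp only [cycG, SimpleGraph.fromRel_adj, ← Fin.val_add_one_eq_mod, Fin.val_inj]
  constructor
  · rintro ⟨-, h | h⟩ <;> simp [h]
  · rintro (rfl | rfl)
    · exact ⟨(Fin.add_one_ne_self hn i).symm, Or.inl rfl⟩
    · exact ⟨Fin.add_one_ne_self hn j, Or.inr rfl⟩

def cycleEdge (i : Fin n) : Sym2 (Fin n) := s(i, i + 1)

lemma cycleEdge_injective (hn : 3 ≤ n) : Function.Injective (cycleEdge : Fin n → Sym2 (Fin n)) := by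
  intro i j h
  rcases Sym2.eq_iff.1 h with ⟨h, -⟩ | ⟨rfl, h⟩
  · exact h
  · have := congrArg Fin.val h
    simp only [Fin.val_add_one_eq_ite] at this
    split_ifs at this <;> omega

lemma exists_cycleEdge_eq (hn : 2 ≤ n) {e : Sym2 (Fin n)} (he : e ∈ (cycG n).edgeSet) :
    ∃ i, cycleEdge i = e := by
  induction e using Sym2.ind with
  | _ i j =>
    rw [SimpleGraph.mem_edgeSet, cycG_adj hn] at he
    rcases he with rfl | rfl
    · exact ⟨i, rfl⟩
    · exact ⟨j, Sym2.eq_swap⟩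

def cycleSetsFin (n : ℕ) [NeZero n] : Finset (Finset (Fin n)) :=
  univ.filter fun S => ∀ i ∈ S, i + 1 ∉ S

lemma matchings_cycG (hn : 3 ≤ n) :
    matchings (cycG n) = (cycleSetsFin n).image (image cycleEdge) := by
  have hinj := cycleEdge_injective hn
  ext μ
  simp only [matchings, cycleSetsFin, mem_filter, mem_univ, true_and, mem_image]
  constructor
  · rintro ⟨hsub, hdisj⟩
    refine ⟨univ.filter (cycleEdge · ∈ μ), fun i hi hi1 => ?_, ?_⟩
    · simp only [mem_filter, mem_univ, true_and] at hi hi1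
      exact hdisj _ hi _ hi1 (hinj.ne (Fin.add_one_ne_self (by omega) i).symm) (i + 1)
        (Sym2.mem_mk_right _ _) (Sym2.mem_mk_left _ _)
    · ext e
      simp only [mem_image, mem_filter, mem_univ, true_and]
      constructor
      · rintro ⟨i, hi, rfl⟩
        exact hi
      · intro he
        obtain ⟨i, rfl⟩ := exists_cycleEdge_eq (by omega) (hsub he)
        exact ⟨i, he, rfl⟩
  · rintro ⟨S, hS, rfl⟩
    constructor
    · intro e he
      obtain ⟨i, -, rfl⟩ := mem_image.1 he
      exact (cycG_adj (by omega)).2 (Or.inl rfl)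
    · intro e he f hf hef v hve hvf
      obtain ⟨i, hi, rfl⟩ := mem_image.1 he
      obtain ⟨j, hj, rfl⟩ := mem_image.1 hf
      have hij : i ≠ j := fun h => hef (h ▸ rfl)
      simp only [cycleEdge, Sym2.mem_iff] at hve hvf
      rcases hve with rfl | rfl <;> rcases hvf with h | h
      · exact hij h
      · exact hS j hj (h ▸ hi)
      · exact hS i hi (h ▸ hj)
      · exact hij (add_right_cancel h)

lemma cycleSets_eq_image_val : cycleSets n = (cycleSetsFin n).image (image Fin.val) := by
  rw [cycleSets, pathSets, filter_filter, zero_add, ← range_eq_Ico, ← image_fin_univ,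
    powerset_image, powerset_univ, filter_image, cycleSetsFin]
  congr 1
  refine filter_congr fun S _ => ?_
  simp only [mem_image]
  constructor
  · rintro ⟨hpath, hwrap⟩ i hi hi1
    have hval := Fin.val_add_one_eq_ite i
    split_ifs at hval with h
    · exact hwrap ⟨i, hi, by omega⟩ ⟨_, hi1, hval⟩
    · exact hpath _ ⟨i, hi, rfl⟩ ⟨_, hi1, hval⟩
  · intro h
    refine ⟨?_, ?_⟩
    · rintro _ ⟨i, hi, rfl⟩ ⟨j, hj, hij⟩
      have : j = i + 1 := Fin.ext (by rw [Fin.val_add_one_eq_ite, if_neg (by omega), hij])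
      exact h i hi (this ▸ hj)
    · rintro ⟨i, hi, hi'⟩ ⟨j, hj, hj0⟩
      have : j = i + 1 := Fin.ext (by rw [Fin.val_add_one_eq_ite, if_pos (by omega), hj0])
      exact h i hi (this ▸ hj)

variable {R : Type*} [CommSemiring R]

lemma sum_cycleSetsFin_eq_cyclePoly (Y Z : R) :
    ∑ S ∈ cycleSetsFin n, Y ^ #S * Z ^ (n - #S) = cyclePoly n Y Z := by
  rw [cyclePoly, cycleSets_eq_image_val,
    sum_image fun S _ T _ h => image_injective Fin.val_injective h]
  simp_rw [card_image_of_injective _ Fin.val_injective]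

lemma Tpoly_eq_cyclePoly (hn : 3 ≤ n) (Y Z : R) : Tpoly n Y Z = cyclePoly n Y Z := by
  have hinj := cycleEdge_injective hn
  rw [Tpoly, matchings_cycG hn, sum_image fun S _ T _ h => image_injective hinj h,
    ← sum_cycleSetsFin_eq_cyclePoly]
  simp_rw [card_image_of_injective _ hinj]

end CycleEdges

namespace PowerSeries

lemma mk_ite_lt_eq_X_pow_mul {R : Type*} [Semiring R] (k : ℕ) (f : ℕ → R) :
    mk (fun n => if n < k then 0 else f n) = X ^ k * mk (fun n => f (n + k)) := by
  ext n
  rw [coeff_mk, coeff_X_pow_mul', coeff_mk]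
  split_ifs with h h' h'
  · omega
  · rfl
  · rw [Nat.sub_add_cancel h']
  · omega

lemma one_sub_mul_mk_of_linear_recurrence {R : Type*} [CommRing R] {a b : R} {f : ℕ → R}
    (hf : ∀ n, f (n + 2) = a * f (n + 1) + b * f n) :
    (1 - X * C a - X ^ 2 * C b) * mk f = C (f 0) + C (f 1 - a * f 0) * X := by
  ext n
  rcases n with _ | _ | n
  · simp
  · simp [sub_mul, mul_assoc, coeff_X_pow_mul']
  · simp [sub_mul, mul_assoc, coeff_X_pow_mul', hf]

end PowerSeries

/-- `(1 - x·z - x²·y·z) · Σ_{n≥3} T_n(y,z) xⁿ = (3yz²+z³)·x³ + (2y²z²+yz³)·x⁴`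
in the ring of formal power series in `x` over `ℤ[y,z]`. -/
theorem cycle_matching_gf :
    (1 - PowerSeries.X * PowerSeries.C (R := MvPolynomial (Fin 2) ℤ) (MvPolynomial.X 1)
        - PowerSeries.X ^ 2 *
            PowerSeries.C (R := MvPolynomial (Fin 2) ℤ) (MvPolynomial.X 0 * MvPolynomial.X 1)) *
      PowerSeries.mk (fun n =>
        if n < 3 then 0
        else (Tpoly n (MvPolynomial.X 0) (MvPolynomial.X 1) : MvPolynomial (Fin 2) ℤ)) =
      PowerSeries.C (R := MvPolynomial (Fin 2) ℤ)
          (3 * MvPolynomial.X 0 * MvPolynomial.X 1 ^ 2 + MvPolynomial.X 1 ^ 3) *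
        PowerSeries.X ^ 3 +
      PowerSeries.C (R := MvPolynomial (Fin 2) ℤ)
          (2 * MvPolynomial.X 0 ^ 2 * MvPolynomial.X 1 ^ 2 +
            MvPolynomial.X 0 * MvPolynomial.X 1 ^ 3) *
        PowerSeries.X ^ 4 := by
  set y : MvPolynomial (Fin 2) ℤ := MvPolynomial.X 0
  set z : MvPolynomial (Fin 2) ℤ := MvPolynomial.X 1
  have hT (n : ℕ) : Tpoly (n + 3) y z = cyclePoly (n + 3) y z := Tpoly_eq_cyclePoly (by omega) y z
  have hrec (n : ℕ) :
      Tpoly (n + 2 + 3) y z = z * Tpoly (n + 1 + 3) y z + y * z * Tpoly (n + 3) y z := by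
    simp only [hT, cyclePoly_add_five]
  rw [PowerSeries.mk_ite_lt_eq_X_pow_mul, mul_left_comm,
    PowerSeries.one_sub_mul_mk_of_linear_recurrence hrec]
  simp only [hT, Nat.reduceAdd, cyclePoly_three, cyclePoly_four, add_sub_cancel_left]
  ring
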